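/- arXiv:1611.01066 — 7 statements merged into one kernel-verified Lean document; each statement's English description precedes it below -/
import Mathlib

section
/- Let p, n ≥ 2 and s ≥ 1 be natural numbers, and let c₁, c₂, M₀ > 0 be constants. Let v ∈ ℝ^p be s-sparse with ‖v‖₂ = 1, let 𝒮 be a symmetric positive definite p×p real matrix with ‖𝒮⁻¹‖₁ ≤ M₀, let S be a symmetric p×p real matrix with ‖S − 𝒮‖_max ≤ c₁·√(log p / n), and let ṽ ∈ ℝ^p satisfy ‖S·ṽ − 𝒮·v‖_∞ ≤ c₂·√(log p / n). Let τₙ ≥ (c₂ + c₁·s)·√(log p / n), and let v̂ ∈ ℝ^p be a minimizer of ‖·‖₁ over the feasible set {w ∈ ℝ^p : ‖S·ṽ − S·w‖_∞ ≤ τₙ}. Then ‖v̂ − v‖₁ ≤ 8·√10 · s · M₀ · τₙ. -/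
open scoped BigOperators

/-- The ℓ1 norm of a vector. -/
noncomputable def l1 {p : ℕ} (x : Fin p → ℝ) : ℝ := ∑ i, |x i|

/-- The Euclidean (ℓ2) norm of a vector. -/
noncomputable def l2 {p : ℕ} (x : Fin p → ℝ) : ℝ := Real.sqrt (∑ i, (x i) ^ 2)

/-- The ℓ∞ norm of a vector. -/
noncomputable def linf {p : ℕ} (x : Fin p → ℝ) : ℝ := ⨆ i, |x i|

/-- The max norm of a matrix: maximum absolute entry. -/
noncomputable def maxNorm {p q : ℕ} (A : Matrix (Fin p) (Fin q) ℝ) : ℝ := ⨆ i, ⨆ j, |A i j|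

/-- The matrix 1-norm: maximum absolute column sum. -/
noncomputable def colNorm1 {p : ℕ} (A : Matrix (Fin p) (Fin p) ℝ) : ℝ := ⨆ j, ∑ i, |A i j|

/-- A vector is `s`-sparse if it has at most `s` nonzero entries. -/
def Sparse {p : ℕ} (s : ℕ) (v : Fin p → ℝ) : Prop :=
  (Finset.univ.filter (fun i => v i ≠ 0)).card ≤ s

/-- Hard threshold of a vector at level `c`: keep entries with `|xᵢ| ≥ c`, zero out the rest. -/
noncomputable def hthresh {p : ℕ} (c : ℝ) (x : Fin p → ℝ) : Fin p → ℝ :=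
  fun i => if c ≤ |x i| then x i else 0

lemma abs_le_linf {p : ℕ} (x : Fin p → ℝ) (i : Fin p) : |x i| ≤ linf x :=
  le_ciSup (f := fun i => |x i|) (Set.Finite.bddAbove (Set.finite_range _)) i

lemma linf_le' {p : ℕ} [Nonempty (Fin p)] (x : Fin p → ℝ) {c : ℝ} (h : ∀ i, |x i| ≤ c) :
    linf x ≤ c := ciSup_le h

lemma linf_nonneg' {p : ℕ} [Nonempty (Fin p)] (x : Fin p → ℝ) : 0 ≤ linf x :=
  le_trans (abs_nonneg _) (abs_le_linf x (Classical.arbitrary _))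

lemma abs_le_maxNorm {p q : ℕ} (A : Matrix (Fin p) (Fin q) ℝ) (i : Fin p) (j : Fin q) :
    |A i j| ≤ maxNorm A :=
  le_trans (le_ciSup (f := fun j => |A i j|) (Set.Finite.bddAbove (Set.finite_range _)) j)
    (le_ciSup (f := fun i => ⨆ j, |A i j|) (Set.Finite.bddAbove (Set.finite_range _)) i)

lemma colSum_le_colNorm1 {p : ℕ} (A : Matrix (Fin p) (Fin p) ℝ) (j : Fin p) :
    ∑ i, |A i j| ≤ colNorm1 A :=
  le_ciSup (f := fun j => ∑ i, |A i j|) (Set.Finite.bddAbove (Set.finite_range _)) j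

lemma l1_nonneg {p : ℕ} (x : Fin p → ℝ) : 0 ≤ l1 x :=
  Finset.sum_nonneg fun i _ => abs_nonneg _

lemma abs_mulVec_le_rowSum_linf {p : ℕ} (A : Matrix (Fin p) (Fin p) ℝ)
    (x : Fin p → ℝ) (i : Fin p) : |A.mulVec x i| ≤ (∑ j, |A i j|) * linf x := by
  calc |A.mulVec x i| = |∑ j, A i j * x j| := by rfl
    _ ≤ ∑ j, |A i j * x j| := Finset.abs_sum_le_sum_abs _ _
    _ ≤ ∑ j, |A i j| * linf x := by
        refine Finset.sum_le_sum fun j _ => ?_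
        rw [abs_mul]
        exact mul_le_mul_of_nonneg_left (abs_le_linf x j) (abs_nonneg _)
    _ = (∑ j, |A i j|) * linf x := by rw [Finset.sum_mul]

lemma abs_mulVec_le_maxNorm_l1 {p q : ℕ} (A : Matrix (Fin p) (Fin q) ℝ)
    (x : Fin q → ℝ) (i : Fin p) : |A.mulVec x i| ≤ maxNorm A * l1 x := by
  calc |A.mulVec x i| = |∑ j, A i j * x j| := by rfl
    _ ≤ ∑ j, |A i j * x j| := Finset.abs_sum_le_sum_abs _ _
    _ ≤ ∑ j, maxNorm A * |x j| := by
        refine Finset.sum_le_sum fun j _ => ?_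
        rw [abs_mul]
        exact mul_le_mul_of_nonneg_right (abs_le_maxNorm A i j) (abs_nonneg _)
    _ = maxNorm A * l1 x := by rw [l1, ← Finset.mul_sum]

set_option maxHeartbeats 1000000 in
/-- SELP consistency in ℓ1 norm (Theorem 1, eq. (6) of the paper). -/
theorem selp_consistency_l1
    (p n s : ℕ) (hp : 2 ≤ p) (hn : 2 ≤ n) (hs : 1 ≤ s)
    (c₁ c₂ M₀ : ℝ) (hc₁ : 0 < c₁) (hc₂ : 0 < c₂) (hM₀ : 0 < M₀)
    (v : Fin p → ℝ) (hv_sparse : Sparse s v) (hv_norm : l2 v = 1)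
    (Scal : Matrix (Fin p) (Fin p) ℝ) (hScal_symm : Scal.IsSymm) (hScal_pd : Scal.PosDef)
    (hScal_inv : colNorm1 Scal⁻¹ ≤ M₀)
    (S : Matrix (Fin p) (Fin p) ℝ) (hS_symm : S.IsSymm)
    (hS_close : maxNorm (S - Scal) ≤ c₁ * Real.sqrt (Real.log p / n))
    (vtil : Fin p → ℝ)
    (hvtil : linf (S.mulVec vtil - Scal.mulVec v) ≤ c₂ * Real.sqrt (Real.log p / n))
    (τ : ℝ) (hτ : (c₂ + c₁ * s) * Real.sqrt (Real.log p / n) ≤ τ)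
    (vhat : Fin p → ℝ)
    (hfeas : linf (S.mulVec vtil - S.mulVec vhat) ≤ τ)
    (hmin : ∀ w : Fin p → ℝ, linf (S.mulVec vtil - S.mulVec w) ≤ τ → l1 vhat ≤ l1 w) :
    l1 (vhat - v) ≤ 8 * Real.sqrt 10 * s * M₀ * τ := by
  haveI : Nonempty (Fin p) := Fin.pos_iff_nonempty.mp (by omega)
  set E := Real.sqrt (Real.log p / n) with hE
  have hE0 : 0 ≤ E := Real.sqrt_nonneg _
  have hs1 : (1:ℝ) ≤ (s:ℝ) := by exact_mod_cast hs
  have hτ0 : 0 ≤ τ := le_trans (by positivity) hτ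
  -- bound on the maximum entry of Scal - S
  have hmaxN : maxNorm (Scal - S) ≤ c₁ * E := by
    refine ciSup_le fun i => ciSup_le fun j => ?_
    have h1 := abs_le_maxNorm (S - Scal) i j
    have h2 : |(Scal - S) i j| = |(S - Scal) i j| := by
      simp [Matrix.sub_apply, abs_sub_comm]
    rw [h2]; exact le_trans h1 hS_close
  -- the support of v
  set T : Finset (Fin p) := Finset.univ.filter (fun i => v i ≠ 0) with hT
  have hvoff : ∀ i ∉ T, v i = 0 := by
    intro i hi
    by_contra hne
    exact hi (by simp [hT, hne])
  have hTcard : (T.card : ℝ) ≤ (s : ℝ) := by exact_mod_cast hv_sparse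
  -- l1 v ≤ sqrt s
  have hsumsq : ∑ i, (v i) ^ 2 = 1 := by
    have h1 : Real.sqrt (∑ i, (v i) ^ 2) = 1 := hv_norm
    rwa [Real.sqrt_eq_one] at h1
  have hl1v_eq : l1 v = ∑ i ∈ T, |v i| := by
    rw [l1]
    symm
    apply Finset.sum_subset (Finset.subset_univ _)
    intro i _ hi
    simp [hvoff i hi]
  have hl1v : l1 v ≤ Real.sqrt s := by
    have hcs : (∑ i ∈ T, |v i|) ^ 2 ≤ (T.card : ℝ) * ∑ i ∈ T, |v i| ^ 2 :=
      sq_sum_le_card_mul_sum_sq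
    have h2 : ∑ i ∈ T, |v i| ^ 2 ≤ 1 := by
      rw [← hsumsq]
      simp_rw [sq_abs]
      exact Finset.sum_le_sum_of_subset_of_nonneg (Finset.subset_univ _)
        (fun i _ _ => sq_nonneg _)
    have h3 : (l1 v) ^ 2 ≤ (s : ℝ) := by
      rw [hl1v_eq]
      nlinarith [Finset.sum_nonneg (fun i (_ : i ∈ T) => abs_nonneg (v i))]
    have h4 : l1 v = Real.sqrt ((l1 v) ^ 2) := (Real.sqrt_sq (l1_nonneg v)).symm
    rw [h4]
    exact Real.sqrt_le_sqrt h3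
  have hsqrts : Real.sqrt s ≤ (s : ℝ) := by
    nlinarith [Real.sq_sqrt (show (0:ℝ) ≤ (s:ℝ) by positivity), Real.sqrt_nonneg (s:ℝ),
      sq_nonneg (Real.sqrt s - 1)]
  -- v is feasible
  have hfeasv : linf (S.mulVec vtil - S.mulVec v) ≤ τ := by
    refine linf_le' _ fun i => ?_
    have h1 : |(S.mulVec vtil - Scal.mulVec v) i| ≤ c₂ * E :=
      le_trans (abs_le_linf _ i) hvtil
    have h2 : |((Scal - S).mulVec v) i| ≤ (c₁ * E) * l1 v :=
      le_trans (abs_mulVec_le_maxNorm_l1 _ _ i)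
        (mul_le_mul_of_nonneg_right hmaxN (l1_nonneg v))
    have h3 : (S.mulVec vtil - S.mulVec v) i
        = (S.mulVec vtil - Scal.mulVec v) i + ((Scal - S).mulVec v) i := by
      simp only [Matrix.sub_mulVec, Pi.sub_apply]
      ring
    rw [h3]
    have h4 : (c₁ * E) * l1 v ≤ c₁ * E * (s : ℝ) :=
      mul_le_mul_of_nonneg_left (le_trans hl1v hsqrts) (mul_nonneg hc₁.le hE0)
    calc |(S.mulVec vtil - Scal.mulVec v) i + ((Scal - S).mulVec v) i|
        ≤ |(S.mulVec vtil - Scal.mulVec v) i| + |((Scal - S).mulVec v) i| := abs_add_le _ _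
      _ ≤ c₂ * E + c₁ * E * (s : ℝ) := by linarith
      _ = (c₂ + c₁ * s) * E := by ring
      _ ≤ τ := hτ
  have hl1hat : l1 vhat ≤ l1 v := hmin v hfeasv
  -- the error vector
  set d : Fin p → ℝ := vhat - v with hd
  have hdi : ∀ i, d i = vhat i - v i := fun i => rfl
  have hL0 : 0 ≤ l1 d := l1_nonneg d
  -- cone condition
  have hcone : ∑ i ∈ Tᶜ, |d i| ≤ ∑ i ∈ T, |d i| := by
    have e1 : ∑ i ∈ T, |vhat i| + ∑ i ∈ Tᶜ, |vhat i| = l1 vhat :=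
      Finset.sum_add_sum_compl T _
    have e2 : ∀ i ∈ Tᶜ, |vhat i| = |d i| := by
      intro i hi
      rw [hdi, hvoff i (Finset.mem_compl.mp hi), sub_zero]
    have e3 : ∑ i ∈ Tᶜ, |vhat i| = ∑ i ∈ Tᶜ, |d i| := Finset.sum_congr rfl e2
    have e4 : ∑ i ∈ T, (|v i| - |d i|) ≤ ∑ i ∈ T, |vhat i| := by
      refine Finset.sum_le_sum fun i _ => ?_
      have : |v i| - |vhat i| ≤ |v i - vhat i| := abs_sub_abs_le_abs_sub _ _
      have h5 : |v i - vhat i| = |d i| := by rw [hdi, abs_sub_comm]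
      linarith [h5 ▸ this]
    rw [Finset.sum_sub_distrib] at e4
    have e5 : l1 v = ∑ i ∈ T, |v i| := hl1v_eq
    linarith
  have hl1d_split : l1 d = ∑ i ∈ T, |d i| + ∑ i ∈ Tᶜ, |d i| :=
    (Finset.sum_add_sum_compl T _).symm
  have hsumT : ∑ i ∈ T, |d i| ≤ (T.card : ℝ) * linf d := by
    calc ∑ i ∈ T, |d i| ≤ ∑ _i ∈ T, linf d :=
          Finset.sum_le_sum fun i _ => abs_le_linf d i
      _ = (T.card : ℝ) * linf d := by rw [Finset.sum_const, nsmul_eq_mul]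
  have hlinfd0 : 0 ≤ linf d := linf_nonneg' d
  have hl1d_le : l1 d ≤ 2 * (s:ℝ) * linf d := by
    have := mul_le_mul_of_nonneg_right hTcard hlinfd0
    nlinarith
  have hl1d_2s : l1 d ≤ 2 * Real.sqrt s := by
    have h1 : l1 d ≤ l1 vhat + l1 v := by
      rw [l1, l1, l1, ← Finset.sum_add_distrib]
      refine Finset.sum_le_sum fun i _ => ?_
      rw [hdi]
      exact abs_sub _ _
    linarith
  -- inverse matrix properties
  have hdet : IsUnit Scal.det := hScal_pd.det_pos.ne'.isUnit
  have hinv_symm : Scal⁻¹.IsSymm := by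
    rw [Matrix.IsSymm, Matrix.transpose_nonsing_inv, hScal_symm]
  have hrowsum : ∀ i, ∑ j, |Scal⁻¹ i j| ≤ M₀ := by
    intro i
    have h1 : ∑ j, |Scal⁻¹ i j| = ∑ j, |Scal⁻¹ j i| :=
      Finset.sum_congr rfl fun j _ => by rw [hinv_symm.apply j i]
    rw [h1]
    exact le_trans (colSum_le_colNorm1 _ i) hScal_inv
  set K := linf (Scal.mulVec d) with hK
  have hK0 : 0 ≤ K := linf_nonneg' _
  have hlinfd : linf d ≤ M₀ * K := by
    refine linf_le' _ fun i => ?_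
    have hrepr : d = Scal⁻¹.mulVec (Scal.mulVec d) := by
      rw [Matrix.mulVec_mulVec, Matrix.nonsing_inv_mul _ hdet, Matrix.one_mulVec]
    calc |d i| = |Scal⁻¹.mulVec (Scal.mulVec d) i| := by rw [← hrepr]
      _ ≤ (∑ j, |Scal⁻¹ i j|) * K := abs_mulVec_le_rowSum_linf _ _ i
      _ ≤ M₀ * K := mul_le_mul_of_nonneg_right (hrowsum i) hK0
  have hKle : K ≤ 2 * τ + (c₁ * E) * l1 d := by
    refine linf_le' _ fun i => ?_
    have e1 : Scal.mulVec d i = ((Scal - S).mulVec d) i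
        + ((S.mulVec vtil - S.mulVec v) i - (S.mulVec vtil - S.mulVec vhat) i) := by
      simp only [Matrix.sub_mulVec, Matrix.mulVec_sub, hd, Pi.sub_apply]
      ring
    have h2 : |((Scal - S).mulVec d) i| ≤ (c₁ * E) * l1 d :=
      le_trans (abs_mulVec_le_maxNorm_l1 _ _ i)
        (mul_le_mul_of_nonneg_right hmaxN (l1_nonneg d))
    have h3 : |(S.mulVec vtil - S.mulVec v) i| ≤ τ := le_trans (abs_le_linf _ i) hfeasv
    have h4 : |(S.mulVec vtil - S.mulVec vhat) i| ≤ τ := le_trans (abs_le_linf _ i) hfeas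
    have key : ∀ x y z : ℝ, |x| ≤ (c₁ * E) * l1 d → |y| ≤ τ → |z| ≤ τ →
        |x + (y - z)| ≤ 2 * τ + (c₁ * E) * l1 d := by
      intro x y z hx hy hz
      have k1 := abs_add_le x (y - z)
      have k2 := abs_sub y z
      linarith
    rw [e1]
    exact key _ _ _ h2 h3 h4
  -- main inequality
  have hcse : c₁ * (s:ℝ) * E ≤ τ := by nlinarith [mul_nonneg hc₂.le hE0]
  have st1 : linf d ≤ M₀ * (2 * τ + c₁ * E * l1 d) :=
    le_trans hlinfd (mul_le_mul_of_nonneg_left hKle hM₀.le)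
  have st2 : l1 d ≤ 2 * (s:ℝ) * (M₀ * (2 * τ + c₁ * E * l1 d)) :=
    le_trans hl1d_le (mul_le_mul_of_nonneg_left st1 (by positivity))
  have hmain : l1 d ≤ 4 * (s:ℝ) * M₀ * τ + 2 * M₀ * τ * l1 d := by
    have hint : 0 ≤ (τ - c₁ * (s:ℝ) * E) * (2 * M₀ * l1 d) :=
      mul_nonneg (by linarith) (by positivity)
    nlinarith [st2]
  -- the √10 constant
  have h310 : (3:ℝ) ≤ Real.sqrt 10 := by
    nlinarith [Real.sq_sqrt (show (0:ℝ) ≤ 10 by norm_num), Real.sqrt_nonneg (10:ℝ)]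
  have hMτ0 : 0 ≤ M₀ * τ := mul_nonneg hM₀.le hτ0
  have hsMτ0 : 0 ≤ (s:ℝ) * (M₀ * τ) := mul_nonneg (by positivity) hMτ0
  by_cases hc : 2 * Real.sqrt s ≤ 8 * Real.sqrt 10 * s * M₀ * τ
  · linarith
  · push_neg at hc
    have h24 : 24 * ((s:ℝ) * (M₀ * τ)) ≤ 8 * Real.sqrt 10 * s * M₀ * τ := by
      nlinarith [hsMτ0]
    have hsm : M₀ * τ < 1 / 12 := by nlinarith [hsqrts, hs1, hsMτ0]
    have hint2 : 0 ≤ (1/12 - M₀ * τ) * l1 d := mul_nonneg (by linarith) hL0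
    nlinarith [hmain, hsMτ0, h310]
end

section
/- Let S and 𝒮 be p×p real matrices and v, ṽ ∈ ℝ^p. Suppose ‖S − 𝒮‖_max ≤ a and ‖S·ṽ − 𝒮·v‖_∞ ≤ b for some a, b ≥ 0. Then ‖S·ṽ − S·v‖_∞ ≤ b + a·‖v‖₁. In particular, if v is s-sparse with ‖v‖₂ = 1, a = c₁·√(log p / n), b = c₂·√(log p / n), and τₙ ≥ (c₂ + c₁·s)·√(log p / n), then v belongs to the feasible set {w : ‖S·ṽ − S·w‖_∞ ≤ τₙ}. -/
open scoped BigOperators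

/-- Feasibility of the true vector: `‖S·vtil − S·v‖_∞ ≤ b + a·‖v‖₁`; in particular, with
the rates `a = c₁·√(log p / n)`, `b = c₂·√(log p / n)` and `τₙ ≥ (c₂ + c₁·s)·√(log p / n)`,
an `s`-sparse unit vector `v` is feasible for the SELP constraint. -/
theorem selp_true_vector_feasible
    (p n s : ℕ) (S Scal : Matrix (Fin p) (Fin p) ℝ) (v vtil : Fin p → ℝ)
    (a b : ℝ) (ha : 0 ≤ a) (hb : 0 ≤ b)
    (hmax : maxNorm (S - Scal) ≤ a)
    (htil : linf (S.mulVec vtil - Scal.mulVec v) ≤ b) :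
    linf (S.mulVec vtil - S.mulVec v) ≤ b + a * l1 v ∧
    (∀ c₁ c₂ τ : ℝ, Sparse s v → l2 v = 1 →
      a = c₁ * Real.sqrt (Real.log p / n) →
      b = c₂ * Real.sqrt (Real.log p / n) →
      (c₂ + c₁ * s) * Real.sqrt (Real.log p / n) ≤ τ →
      v ∈ {w : Fin p → ℝ | linf (S.mulVec vtil - S.mulVec w) ≤ τ}) := by
  have hl1 : 0 ≤ l1 v := Finset.sum_nonneg fun i _ => abs_nonneg _
  have hentry : ∀ i j, |(Scal - S) i j| ≤ a := by
    intro i j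
    have h1 : |(S - Scal) i j| ≤ maxNorm (S - Scal) := by
      unfold maxNorm
      refine le_trans (le_ciSup (f := fun j => |(S - Scal) i j|)
        (Set.Finite.bddAbove (Set.finite_range _)) j) ?_
      exact le_ciSup (f := fun i => ⨆ j, |(S - Scal) i j|)
        (Set.Finite.bddAbove (Set.finite_range _)) i
    have h2 : (Scal - S) i j = -((S - Scal) i j) := by
      simp [Matrix.sub_apply]
    rw [h2, abs_neg]
    exact le_trans h1 hmax
  have hkey : linf (S.mulVec vtil - S.mulVec v) ≤ b + a * l1 v := by
    refine Real.iSup_le (fun i => ?_) (by positivity)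
    have hsplit : (S.mulVec vtil - S.mulVec v) i
        = (S.mulVec vtil - Scal.mulVec v) i + ((Scal - S).mulVec v) i := by
      simp [Matrix.sub_mulVec, Pi.sub_apply]
    have h1 : |(S.mulVec vtil - Scal.mulVec v) i| ≤ b :=
      le_trans (le_ciSup (f := fun i => |(S.mulVec vtil - Scal.mulVec v) i|)
        (Set.Finite.bddAbove (Set.finite_range _)) i) htil
    have h2 : |((Scal - S).mulVec v) i| ≤ a * l1 v := by
      unfold Matrix.mulVec dotProduct
      calc |∑ j, (Scal - S) i j * v j| ≤ ∑ j, |(Scal - S) i j * v j| :=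
            Finset.abs_sum_le_sum_abs _ _
        _ ≤ ∑ j, a * |v j| := by
            refine Finset.sum_le_sum fun j _ => ?_
            rw [abs_mul]
            exact mul_le_mul_of_nonneg_right (hentry i j) (abs_nonneg _)
        _ = a * l1 v := by rw [l1, Finset.mul_sum]
    calc |(S.mulVec vtil - S.mulVec v) i|
        ≤ |(S.mulVec vtil - Scal.mulVec v) i| + |((Scal - S).mulVec v) i| := by
          rw [hsplit]; exact abs_add_le _ _
      _ ≤ b + a * l1 v := add_le_add h1 h2
  refine ⟨hkey, fun c₁ c₂ τ hsp hl2 hA hB hτ => ?_⟩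
  have hsum : (∑ i, (v i) ^ 2) = 1 := by
    have := congrArg (· ^ 2) hl2
    simpa [l2, Real.sq_sqrt (Finset.sum_nonneg fun i _ => sq_nonneg (v i))] using this
  have habs1 : ∀ i, |v i| ≤ 1 := by
    intro i
    have h1 : (v i) ^ 2 ≤ 1 := by
      rw [← hsum]
      exact Finset.single_le_sum (fun j _ => sq_nonneg (v j)) (Finset.mem_univ i)
    nlinarith [abs_nonneg (v i), sq_abs (v i)]
  have hl1s : l1 v ≤ (s : ℝ) := by
    have : l1 v = ∑ i ∈ Finset.univ.filter (fun i => v i ≠ 0), |v i| := by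
      rw [l1]
      refine (Finset.sum_filter_of_ne fun i _ h => ?_).symm
      intro hv; simp [hv] at h
    rw [this]
    calc (∑ i ∈ Finset.univ.filter (fun i => v i ≠ 0), |v i|)
        ≤ ∑ _i ∈ Finset.univ.filter (fun i => v i ≠ 0), (1 : ℝ) :=
          Finset.sum_le_sum fun i _ => habs1 i
      _ = (Finset.univ.filter (fun i => v i ≠ 0)).card := by simp
      _ ≤ (s : ℝ) := by exact_mod_cast hsp
  show linf (S.mulVec vtil - S.mulVec v) ≤ τ
  refine hkey.trans (le_trans ?_ hτ)
  have ha2 : a * l1 v ≤ a * s := mul_le_mul_of_nonneg_left hl1s ha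
  have h0 : 0 ≤ Real.sqrt (Real.log p / n) := Real.sqrt_nonneg _
  calc b + a * l1 v ≤ b + a * s := by linarith
    _ = (c₂ + c₁ * s) * Real.sqrt (Real.log p / n) := by rw [hA, hB]; ring
end

section
/- Let v, v̂ ∈ ℝ^p with ‖v̂‖₁ ≤ ‖v‖₁, let c ≥ 0, and let v̂ᶜ denote the hard threshold of v̂ at level c. Then ‖v̂ᶜ − v̂‖₁ ≤ ‖v̂ᶜ − v‖₁, and consequently ‖v̂ − v‖₁ ≤ 2·‖v̂ᶜ − v‖₁. -/
open scoped BigOperators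

/-- If `‖vhat‖₁ ≤ ‖v‖₁` then `‖vhatᶜ − vhat‖₁ ≤ ‖vhatᶜ − v‖₁`, and consequently
`‖vhat − v‖₁ ≤ 2·‖vhatᶜ − v‖₁`. -/
theorem l1_hthresh_sub_le
    (p : ℕ) (v vhat : Fin p → ℝ) (h : l1 vhat ≤ l1 v) (c : ℝ) (hc : 0 ≤ c) :
    l1 (hthresh c vhat - vhat) ≤ l1 (hthresh c vhat - v) ∧
    l1 (vhat - v) ≤ 2 * l1 (hthresh c vhat - v) := by
  set T := hthresh c vhat with hT
  have key : l1 (T - vhat) + l1 v ≤ l1 (T - v) + l1 vhat := by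
    simp only [l1, ← Finset.sum_add_distrib]
    apply Finset.sum_le_sum
    intro i _
    simp only [Pi.sub_apply, hT, hthresh]
    by_cases hi : c ≤ |vhat i|
    · simp only [if_pos hi, sub_self, abs_zero, zero_add]
      have := abs_sub_abs_le_abs_sub (v i) (vhat i)
      rw [abs_sub_comm] at this
      linarith
    · simp only [if_neg hi, zero_sub, abs_neg]
      linarith
  have h1 : l1 (T - vhat) ≤ l1 (T - v) := by linarith
  refine ⟨h1, ?_⟩
  have h2 : l1 (vhat - v) ≤ l1 (T - vhat) + l1 (T - v) := by
    simp only [l1, ← Finset.sum_add_distrib]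
    apply Finset.sum_le_sum
    intro i _
    simp only [Pi.sub_apply]
    have := abs_sub (T i - vhat i) (T i - v i)
    calc |vhat i - v i| = |(T i - v i) - (T i - vhat i)| := by ring_nf
      _ ≤ |T i - vhat i| + |T i - v i| := by
          rw [abs_sub_comm]; exact abs_sub (T i - vhat i) (T i - v i)
  linarith
end

section
/- Let v, v̂ ∈ ℝ^p with ‖v̂ − v‖_∞ ≤ t for some t > 0, suppose v is s-sparse, and let v̂ᵗ denote the hard threshold of v̂ at level 2t. Then for every index i with vᵢ = 0 one has (v̂ᵗ)ᵢ = 0, and ‖v̂ᵗ − v‖₂² ≤ 10·s·t². -/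
open scoped BigOperators

/-- If `‖vhat − v‖_∞ ≤ t` and `v` is `s`-sparse, then the hard threshold of `vhat` at `2t`
vanishes off the support of `v`, and `‖vhatᵗ − v‖₂² ≤ 10·s·t²`. -/
theorem hthresh_support_and_l2_bound
    (p s : ℕ) (hs : 1 ≤ s) (v vhat : Fin p → ℝ) (t : ℝ) (ht : 0 < t)
    (hinf : linf (vhat - v) ≤ t) (hv_sparse : Sparse s v) :
    (∀ i, v i = 0 → hthresh (2 * t) vhat i = 0) ∧
    (l2 (hthresh (2 * t) vhat - v)) ^ 2 ≤ 10 * s * t ^ 2 := by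
  have hpt : ∀ i, |vhat i - v i| ≤ t := by
    intro i
    refine le_trans ?_ hinf
    have hb : BddAbove (Set.range fun i => |(vhat - v) i|) :=
      (Set.finite_range _).bddAbove
    exact le_ciSup hb i
  have hzero : ∀ i, v i = 0 → hthresh (2 * t) vhat i = 0 := by
    intro i hi
    have h1 : |vhat i| ≤ t := by
      have := hpt i; rw [hi] at this; simpa using this
    have hnc : ¬ (2 * t ≤ |vhat i|) := by nlinarith
    simp [hthresh, hnc]
  refine ⟨hzero, ?_⟩
  have hterm : ∀ i, (hthresh (2 * t) vhat i - v i) ^ 2 ≤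
      (if v i ≠ 0 then (9 : ℝ) * t ^ 2 else 0) := by
    intro i
    by_cases hvi : v i = 0
    · simp [hvi, hzero i hvi]
    · simp only [hvi, ne_eq, not_false_eq_true, if_true]
      have h1 := abs_le.mp (hpt i)
      by_cases hc : 2 * t ≤ |vhat i|
      · have heq : hthresh (2 * t) vhat i = vhat i := by simp [hthresh, hc]
        rw [heq]; nlinarith [h1.1, h1.2]
      · have heq : hthresh (2 * t) vhat i = 0 := by simp [hthresh, hc]
        rw [heq]
        have h2 := abs_lt.mp (lt_of_not_ge hc)
        nlinarith [h1.1, h1.2, h2.1, h2.2]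
  have hsum : ∑ i, (hthresh (2 * t) vhat i - v i) ^ 2 ≤ 9 * s * t ^ 2 := by
    calc ∑ i, (hthresh (2 * t) vhat i - v i) ^ 2
        ≤ ∑ i, (if v i ≠ 0 then (9 : ℝ) * t ^ 2 else 0) :=
          Finset.sum_le_sum fun i _ => hterm i
      _ = (Finset.univ.filter (fun i => v i ≠ 0)).card * (9 * t ^ 2) := by
          rw [Finset.sum_ite, Finset.sum_const, Finset.sum_const]; simp [nsmul_eq_mul]
      _ ≤ s * (9 * t ^ 2) := by
          have := hv_sparse
          have h9 : (0:ℝ) ≤ 9 * t ^ 2 := by positivity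
          exact mul_le_mul_of_nonneg_right (by exact_mod_cast hv_sparse) h9
      _ = 9 * s * t ^ 2 := by ring
  have hnn : (0:ℝ) ≤ ∑ i, ((hthresh (2 * t) vhat - v) i) ^ 2 :=
    Finset.sum_nonneg fun i _ => sq_nonneg _
  have hl2 : (l2 (hthresh (2 * t) vhat - v)) ^ 2
      = ∑ i, (hthresh (2 * t) vhat i - v i) ^ 2 := by
    rw [l2, Real.sq_sqrt hnn]; rfl
  rw [hl2]
  have hst : (0:ℝ) ≤ (s : ℝ) * t ^ 2 := by positivity
  nlinarith [hsum, hst]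
end

section
/- Let v, v̂ ∈ ℝ^p with ‖v̂‖₁ ≤ ‖v‖₁ and ‖v̂ − v‖_∞ ≤ t for some t > 0, and suppose v is s-sparse. Then ‖v̂ − v‖₁ ≤ 2·√10·s·t. -/
open scoped BigOperators

/-- ℓ1 error bound: if `‖vhat‖₁ ≤ ‖v‖₁`, `‖vhat − v‖_∞ ≤ t` and `v` is `s`-sparse, then
`‖vhat − v‖₁ ≤ 2·√10·s·t`. -/
theorem l1_error_bound
    (p s : ℕ) (hs : 1 ≤ s) (v vhat : Fin p → ℝ) (t : ℝ) (ht : 0 < t)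
    (hl1 : l1 vhat ≤ l1 v) (hinf : linf (vhat - v) ≤ t) (hv_sparse : Sparse s v) :
    l1 (vhat - v) ≤ 2 * Real.sqrt 10 * s * t := by
  have hpt : ∀ i, |vhat i - v i| ≤ t := by
    intro i
    have h1 : |(vhat - v) i| ≤ linf (vhat - v) := by
      unfold linf
      exact le_ciSup (f := fun j => |(vhat - v) j|) (Set.Finite.bddAbove (Set.finite_range _)) i
    simpa using h1.trans hinf
  set S := Finset.univ.filter (fun i => v i ≠ 0) with hS
  have hvz : ∀ i ∈ Sᶜ, v i = 0 := by
    intro i hi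
    simpa [hS] using (Finset.mem_compl.mp hi)
  have hSsum : ∑ i ∈ S, |vhat i - v i| ≤ s * t := by
    calc ∑ i ∈ S, |vhat i - v i| ≤ ∑ _i ∈ S, t := Finset.sum_le_sum fun i _ => hpt i
      _ = S.card * t := by rw [Finset.sum_const, nsmul_eq_mul]
      _ ≤ s * t := by
          have := hv_sparse
          exact mul_le_mul_of_nonneg_right (by exact_mod_cast this) ht.le
  have hCsum : ∑ i ∈ Sᶜ, |vhat i - v i| ≤ s * t := by
    have h1 : ∑ i ∈ Sᶜ, |vhat i - v i| = ∑ i ∈ Sᶜ, |vhat i| :=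
      Finset.sum_congr rfl fun i hi => by rw [hvz i hi, sub_zero]
    have hsplit : ∀ (x : Fin p → ℝ), ∑ i, |x i| = ∑ i ∈ S, |x i| + ∑ i ∈ Sᶜ, |x i| := by
      intro x
      rw [← Finset.sum_add_sum_compl S]
    have hl1' : ∑ i ∈ S, |vhat i| + ∑ i ∈ Sᶜ, |vhat i| ≤ ∑ i ∈ S, |v i| + ∑ i ∈ Sᶜ, |v i| := by
      have := hl1
      simp only [l1] at this
      rw [hsplit vhat, hsplit v] at this
      exact this
    have hvC : ∑ i ∈ Sᶜ, |v i| = 0 :=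
      Finset.sum_eq_zero fun i hi => by rw [hvz i hi, abs_zero]
    have h2 : ∑ i ∈ Sᶜ, |vhat i| ≤ ∑ i ∈ S, (|v i| - |vhat i|) := by
      rw [Finset.sum_sub_distrib]; linarith
    have h3 : ∑ i ∈ S, (|v i| - |vhat i|) ≤ ∑ i ∈ S, |vhat i - v i| :=
      Finset.sum_le_sum fun i _ => by
        have := abs_sub_abs_le_abs_sub (v i) (vhat i)
        rw [abs_sub_comm] at this; linarith
    linarith [hSsum]
  have htot : l1 (vhat - v) ≤ 2 * s * t := by
    have : l1 (vhat - v) = ∑ i ∈ S, |vhat i - v i| + ∑ i ∈ Sᶜ, |vhat i - v i| := by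
      simp only [l1, Pi.sub_apply]
      rw [← Finset.sum_add_sum_compl S]
    rw [this]; linarith
  have h10 : (1:ℝ) ≤ Real.sqrt 10 := by
    rw [show (1:ℝ) = Real.sqrt 1 from (Real.sqrt_one).symm]
    exact Real.sqrt_le_sqrt (by norm_num)
  have hst : (0:ℝ) ≤ (s:ℝ) * t := mul_nonneg (Nat.cast_nonneg s) ht.le
  nlinarith
end

section
/- Let v, v̂ ∈ ℝ^p with ‖v̂‖₁ ≤ ‖v‖₁ and ‖v̂ − v‖_∞ ≤ t for some t > 0, suppose v is s-sparse, and let v̂ᵗ denote the hard threshold of v̂ at level 2t. Then ‖v̂ − v̂ᵗ‖₂² ≤ (4 + 2·√10)·s·t². -/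
open scoped BigOperators

/-- The thresholding error satisfies `‖vhat − vhatᵗ‖₂² ≤ (4 + 2·√10)·s·t²`. -/
theorem l2_sq_hthresh_err_bound
    (p s : ℕ) (hs : 1 ≤ s) (v vhat : Fin p → ℝ) (t : ℝ) (ht : 0 < t)
    (hl1 : l1 vhat ≤ l1 v) (hinf : linf (vhat - v) ≤ t) (hv_sparse : Sparse s v) :
    (l2 (vhat - hthresh (2 * t) vhat)) ^ 2 ≤ (4 + 2 * Real.sqrt 10) * s * t ^ 2 := by
  classical
  set S : Finset (Fin p) := Finset.univ.filter (fun i => v i ≠ 0) with hSdef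
  have hei : ∀ i, |vhat i - v i| ≤ t := by
    intro i
    have h1 : |(vhat - v) i| ≤ ⨆ j, |(vhat - v) j| :=
      le_ciSup (f := fun j => |(vhat - v) j|) (Set.Finite.bddAbove (Set.finite_range _)) i
    simp only [linf] at hinf
    simp only [Pi.sub_apply] at h1 hinf
    linarith
  have hvoff : ∀ i ∉ S, v i = 0 := by
    intro i hi; by_contra h; exact hi (Finset.mem_filter.mpr ⟨Finset.mem_univ _, h⟩)
  have h4 : (S.card : ℝ) ≤ s := by exact_mod_cast hv_sparse
  have hoff : ∑ i ∈ Sᶜ, |vhat i| ≤ (s : ℝ) * t := by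
    have hsplit : ∑ i ∈ S, |vhat i| + ∑ i ∈ Sᶜ, |vhat i| = l1 vhat := by
      rw [l1, Finset.sum_add_sum_compl]
    have hlv : l1 v = ∑ i ∈ S, |v i| := by
      rw [l1, ← Finset.sum_add_sum_compl S]
      have hz : ∑ i ∈ Sᶜ, |v i| = 0 := Finset.sum_eq_zero (fun i hi => by
        rw [hvoff i (Finset.mem_compl.mp hi), abs_zero])
      rw [hz, add_zero]
    have h2 : ∑ i ∈ S, (|v i| - |vhat i|) ≤ ∑ i ∈ S, |vhat i - v i| := by
      apply Finset.sum_le_sum; intro i _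
      have h := abs_sub_abs_le_abs_sub (v i) (vhat i)
      rw [abs_sub_comm] at h; linarith
    have h3 : ∑ i ∈ S, |vhat i - v i| ≤ (S.card : ℝ) * t := by
      refine le_trans (Finset.sum_le_card_nsmul _ _ t (fun i _ => hei i)) ?_
      simp [nsmul_eq_mul]
    rw [Finset.sum_sub_distrib] at h2
    have h5 : (S.card : ℝ) * t ≤ (s : ℝ) * t := by nlinarith
    linarith
  have hsum : (l2 (vhat - hthresh (2*t) vhat))^2
      = ∑ i, (vhat i - hthresh (2*t) vhat i)^2 := by
    rw [l2, Real.sq_sqrt (Finset.sum_nonneg fun i _ => sq_nonneg _)]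
    simp [Pi.sub_apply]
  rw [hsum, ← Finset.sum_add_sum_compl S (fun i => (vhat i - hthresh (2*t) vhat i)^2)]
  have hbS : ∑ i ∈ S, (vhat i - hthresh (2*t) vhat i)^2 ≤ (S.card : ℝ) * (4*t^2) := by
    refine le_trans (Finset.sum_le_card_nsmul _ _ (4*t^2) ?_) (by simp [nsmul_eq_mul])
    intro i _
    simp only [hthresh]
    by_cases h : 2*t ≤ |vhat i|
    · simp only [if_pos h, sub_self]; norm_num; positivity
    · push_neg at h
      simp only [if_neg (not_le.mpr h), sub_zero]
      nlinarith [abs_nonneg (vhat i), sq_abs (vhat i)]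
  have hbSc : ∑ i ∈ Sᶜ, (vhat i - hthresh (2*t) vhat i)^2 ≤ t * ∑ i ∈ Sᶜ, |vhat i| := by
    rw [Finset.mul_sum]
    apply Finset.sum_le_sum
    intro i hi
    have hvi : |vhat i| ≤ t := by
      have h := hei i; rw [hvoff i (Finset.mem_compl.mp hi)] at h; simpa using h
    simp only [hthresh]
    by_cases h : 2*t ≤ |vhat i|
    · simp only [if_pos h, sub_self]
      norm_num
      positivity
    · simp only [if_neg h, sub_zero]
      nlinarith [abs_nonneg (vhat i), sq_abs (vhat i)]
  have hsqrt : (1:ℝ) ≤ Real.sqrt 10 := by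
    rw [show (1:ℝ) = Real.sqrt 1 by simp]
    exact Real.sqrt_le_sqrt (by norm_num)
  have hst : (0:ℝ) ≤ (s:ℝ) * t^2 := by positivity
  nlinarith [hoff, hbS, hbSc, sq_nonneg t, mul_le_mul_of_nonneg_right h4 (by positivity : (0:ℝ) ≤ 4*t^2), mul_le_mul_of_nonneg_left hoff ht.le]
end

section
/- Let v, v̂ ∈ ℝ^p with ‖v̂‖₁ ≤ ‖v‖₁ and ‖v̂ − v‖_∞ ≤ t for some t > 0, and suppose v is s-sparse. Then ‖v̂ − v‖₂ ≤ (√(4 + 2·√10) + √10)·√s·t. -/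
open scoped BigOperators

/-- ℓ2 error bound: if `‖vhat‖₁ ≤ ‖v‖₁`, `‖vhat − v‖_∞ ≤ t` and `v` is `s`-sparse, then
`‖vhat − v‖₂ ≤ (√(4 + 2·√10) + √10)·√s·t`. -/
theorem l2_error_bound
    (p s : ℕ) (hs : 1 ≤ s) (v vhat : Fin p → ℝ) (t : ℝ) (ht : 0 < t)
    (hl1 : l1 vhat ≤ l1 v) (hinf : linf (vhat - v) ≤ t) (hv_sparse : Sparse s v) :
    l2 (vhat - v) ≤ (Real.sqrt (4 + 2 * Real.sqrt 10) + Real.sqrt 10) * Real.sqrt s * t := by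
  set h := vhat - v with hh
  have hbound : ∀ i, |h i| ≤ t := by
    intro i
    have : |h i| ≤ ⨆ j, |h j| :=
      le_ciSup (f := fun j => |h j|) (Set.Finite.bddAbove (Set.finite_range _)) i
    exact this.trans hinf
  set S := Finset.univ.filter (fun i => v i ≠ 0) with hSdef
  have hcard : (S.card : ℝ) ≤ (s : ℝ) := Nat.cast_le.mpr hv_sparse
  have hS1 : ∑ i ∈ S, |h i| ≤ s * t := by
    calc ∑ i ∈ S, |h i| ≤ ∑ _i ∈ S, t := Finset.sum_le_sum (fun i _ => hbound i)
    _ = S.card * t := by rw [Finset.sum_const, nsmul_eq_mul]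
    _ ≤ s * t := mul_le_mul_of_nonneg_right hcard ht.le
  have hSc : ∑ i ∈ Sᶜ, |h i| ≤ ∑ i ∈ S, |h i| := by
    have hv0 : ∀ i ∈ Sᶜ, v i = 0 := by
      intro i hi
      simp only [hSdef, Finset.mem_compl, Finset.mem_filter, Finset.mem_univ, true_and,
        not_not] at hi
      exact hi
    have e1 : ∑ i ∈ Sᶜ, |h i| = ∑ i ∈ Sᶜ, |vhat i| := by
      refine Finset.sum_congr rfl (fun i hi => ?_)
      simp [hh, hv0 i hi]
    have e2 : l1 v = ∑ i ∈ S, |v i| := by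
      rw [l1, ← Finset.sum_add_sum_compl S fun i => |v i|]
      have : ∑ i ∈ Sᶜ, |v i| = 0 := by
        refine Finset.sum_eq_zero (fun i hi => by simp [hv0 i hi])
      rw [this, add_zero]
    have e3 : l1 vhat = ∑ i ∈ S, |vhat i| + ∑ i ∈ Sᶜ, |vhat i| := by
      rw [l1, ← Finset.sum_add_sum_compl S fun i => |vhat i|]
    have key : ∑ i ∈ Sᶜ, |vhat i| ≤ ∑ i ∈ S, (|v i| - |vhat i|) := by
      rw [Finset.sum_sub_distrib]
      linarith [hl1, e2.symm, e3.symm]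
    calc ∑ i ∈ Sᶜ, |h i| = ∑ i ∈ Sᶜ, |vhat i| := e1
    _ ≤ ∑ i ∈ S, (|v i| - |vhat i|) := key
    _ ≤ ∑ i ∈ S, |h i| := by
        refine Finset.sum_le_sum (fun i _ => ?_)
        have : |v i| - |vhat i| ≤ |v i - vhat i| := abs_sub_abs_le_abs_sub _ _
        simpa [hh, abs_sub_comm] using this
  have hl1h : l1 h ≤ 2 * s * t := by
    rw [l1, ← Finset.sum_add_sum_compl S fun i => |h i|]
    linarith
  have hsq : ∑ i, (h i) ^ 2 ≤ 2 * s * t ^ 2 := by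
    have : ∑ i, (h i) ^ 2 ≤ ∑ i, t * |h i| := by
      refine Finset.sum_le_sum (fun i _ => ?_)
      have := abs_nonneg (h i)
      calc (h i) ^ 2 = |h i| * |h i| := by rw [abs_mul_abs_self]; ring
      _ ≤ t * |h i| := mul_le_mul_of_nonneg_right (hbound i) this
    rw [← Finset.mul_sum] at this
    have h2 : t * ∑ i, |h i| ≤ t * (2 * s * t) :=
      mul_le_mul_of_nonneg_left hl1h ht.le
    nlinarith
  have hst : (0:ℝ) ≤ Real.sqrt s * t :=
    mul_nonneg (Real.sqrt_nonneg _) ht.le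
  have step1 : l2 h ≤ Real.sqrt 2 * Real.sqrt s * t := by
    rw [l2]
    have : Real.sqrt (∑ i, (h i) ^ 2) ≤ Real.sqrt (2 * s * t ^ 2) :=
      Real.sqrt_le_sqrt hsq
    refine this.trans ?_
    rw [show (2:ℝ) * s * t ^ 2 = 2 * s * t ^ 2 by ring,
      Real.sqrt_mul (by positivity), Real.sqrt_mul (by norm_num : (0:ℝ) ≤ 2),
      Real.sqrt_sq ht.le, mul_assoc]
  refine step1.trans ?_
  have hc : Real.sqrt 2 ≤ Real.sqrt (4 + 2 * Real.sqrt 10) + Real.sqrt 10 := by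
    have h1 : Real.sqrt 2 ≤ Real.sqrt 10 :=
      Real.sqrt_le_sqrt (by norm_num)
    have h2 : (0:ℝ) ≤ Real.sqrt (4 + 2 * Real.sqrt 10) := Real.sqrt_nonneg _
    linarith
  calc Real.sqrt 2 * Real.sqrt s * t = Real.sqrt 2 * (Real.sqrt s * t) := by ring
  _ ≤ (Real.sqrt (4 + 2 * Real.sqrt 10) + Real.sqrt 10) * (Real.sqrt s * t) :=
      mul_le_mul_of_nonneg_right hc hst
  _ = (Real.sqrt (4 + 2 * Real.sqrt 10) + Real.sqrt 10) * Real.sqrt s * t := by ring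
end
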